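/- arXiv:2008.03458 — 5 statements merged into one kernel-verified Lean document; each statement's English description precedes it below -/
import Mathlib

section
/- Let R be a G-graded ring. If the intersection graph of graded left ideals Gr_G(R) is disconnected, then it has no edges at all (i.e., it is a null graph on at least two vertices). -/
/-!
Let `A` and `C` lie in different components, so `A ∩ C = 0`. A vertex `D ≤ C` must equal `C`:
`A + D` is graded and, if proper, a common neighbour of `A` and `C`, so `A + D = R`, and then
the modular law gives `C = (A + D) ∩ C = D + A ∩ C = D`. If `I` and `J` were adjacent, `I ∩ J`
would be a graded vertex below both; since each of `I`, `J` is unreachable from `A` or from `C`,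
this forces `I = I ∩ J = J`.
-/

variable {G R : Type*} [AddGroup G] [DecidableEq G] [Ring R]

/-- The set of proper nontrivial `G`-graded left ideals of `R`. -/
def hV (𝒜 : G → AddSubgroup R) [GradedRing 𝒜] : Set (Ideal R) :=
  {I | I ≠ ⊥ ∧ I ≠ ⊤ ∧ Ideal.IsHomogeneous 𝒜 I}

/-- The intersection graph on a set of (left) ideals: two distinct ideals are
adjacent iff their intersection is nonzero. -/
def interGraph (V : Set (Ideal R)) : SimpleGraph V where
  Adj I J := I ≠ J ∧ (I : Ideal R) ⊓ (J : Ideal R) ≠ ⊥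
  symm := ⟨fun I J ⟨h1, h2⟩ => ⟨h1.symm, by rwa [inf_comm] at h2⟩⟩
  loopless := ⟨fun I ⟨h1, _⟩ => h1 rfl⟩

theorem SimpleGraph.exists_not_reachable_of_not_preconnected {V : Type*} {Γ : SimpleGraph V}
    (h : ¬ Γ.Preconnected) (x : V) : ∃ e, ¬ Γ.Reachable e x := by
  obtain ⟨a, c, hac⟩ : ∃ a c, ¬ Γ.Reachable a c := by
    simpa [SimpleGraph.Preconnected] using h
  by_contra! hx
  exact hac ((hx a).trans (hx c).symm)

theorem SimpleGraph.two_le_encard_of_not_preconnected {α : Type*} {V : Set α} {Γ : SimpleGraph V}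
    (h : ¬ Γ.Preconnected) : 2 ≤ V.encard := by
  have : Nontrivial V := not_subsingleton_iff_nontrivial.mp fun _ ↦ h .of_subsingleton
  exact Order.add_one_le_of_lt <|
    Set.one_lt_encard_iff_nontrivial.mpr (Set.nontrivial_coe_sort.mp this)

theorem interGraph_reachable_of_inf_ne_bot {V : Set (Ideal R)} {I J : V}
    (h : (I : Ideal R) ⊓ J ≠ ⊥) : (interGraph V).Reachable I J := by
  by_cases hIJ : I = J
  · exact hIJ ▸ SimpleGraph.Reachable.refl I
  · exact SimpleGraph.Adj.reachable ⟨hIJ, h⟩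

theorem interGraph_inf_eq_bot_of_not_reachable {V : Set (Ideal R)} {I J : V}
    (h : ¬ (interGraph V).Reachable I J) : (I : Ideal R) ⊓ J = ⊥ :=
  not_not.mp (mt interGraph_reachable_of_inf_ne_bot h)

section Graded

variable {𝒜 : G → AddSubgroup R} [GradedRing 𝒜] {I J : Ideal R}

theorem sup_mem_hV (hI : I ∈ hV 𝒜) (hJ : J ∈ hV 𝒜) (hIJ : I ⊔ J ≠ ⊤) :
    I ⊔ J ∈ hV 𝒜 :=
  ⟨fun h ↦ hI.1 (eq_bot_mono le_sup_left h), hIJ, hI.2.2.sup hJ.2.2⟩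

theorem inf_mem_hV (hI : I ∈ hV 𝒜) (hJ : J ∈ hV 𝒜) (hIJ : I ⊓ J ≠ ⊥) :
    I ⊓ J ∈ hV 𝒜 :=
  ⟨hIJ, fun h ↦ hI.2.1 (eq_top_mono inf_le_left h), hI.2.2.inf hJ.2.2⟩

theorem sup_eq_top_of_not_reachable {A C D : hV 𝒜} (hDC : (D : Ideal R) ≤ C)
    (h : ¬ (interGraph (hV 𝒜)).Reachable A C) : (A : Ideal R) ⊔ D = ⊤ := by
  by_contra hM
  let M : hV 𝒜 := ⟨_, sup_mem_hV A.2 D.2 hM⟩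
  have hAM : (interGraph (hV 𝒜)).Reachable A M := interGraph_reachable_of_inf_ne_bot <| by
    rw [show (A : Ideal R) ⊓ M = A from inf_eq_left.mpr le_sup_left]
    exact A.2.1
  have hMC : (interGraph (hV 𝒜)).Reachable M C := interGraph_reachable_of_inf_ne_bot
    fun hbot ↦ D.2.1 (eq_bot_mono (le_inf le_sup_right hDC) hbot)
  exact h (hAM.trans hMC)

theorem eq_of_le_of_not_reachable {A C D : hV 𝒜} (hDC : (D : Ideal R) ≤ C)
    (h : ¬ (interGraph (hV 𝒜)).Reachable A C) : D = C := by
  refine Subtype.ext ?_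
  calc (D : Ideal R) = (D : Ideal R) ⊔ (A : Ideal R) ⊓ (C : Ideal R) := by
        rw [interGraph_inf_eq_bot_of_not_reachable h, sup_bot_eq]
    _ = ((D : Ideal R) ⊔ A) ⊓ C := (sup_inf_assoc_of_le _ hDC).symm
    _ = C := by rw [sup_comm, sup_eq_top_of_not_reachable hDC h, top_inf_eq]

end Graded

/-- If the intersection graph of graded left ideals is disconnected,
then it is a null graph (no edges) on at least two vertices. -/
theorem stmt1 (𝒜 : G → AddSubgroup R) [GradedRing 𝒜]
    (h : ¬ (interGraph (hV 𝒜)).Preconnected) :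
    (∀ I J : hV 𝒜, ¬ (interGraph (hV 𝒜)).Adj I J) ∧ 2 ≤ (hV 𝒜).encard := by
  refine ⟨fun I J ⟨hIJ, hne⟩ ↦ ?_, SimpleGraph.two_le_encard_of_not_preconnected h⟩
  let N : hV 𝒜 := ⟨_, inf_mem_hV I.2 J.2 hne⟩
  obtain ⟨E, hE⟩ := SimpleGraph.exists_not_reachable_of_not_preconnected h I
  obtain ⟨F, hF⟩ := SimpleGraph.exists_not_reachable_of_not_preconnected h J
  have hNI : N = I := eq_of_le_of_not_reachable inf_le_left hE
  have hNJ : N = J := eq_of_le_of_not_reachable inf_le_right hF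
  exact hIJ (hNI.symm.trans hNJ)
end

section
/- Let R be a G-graded ring. If the intersection graph Gr_G(R) of graded left ideals is connected, then its diameter is at most 2. -/
variable {G R : Type*} [AddGroup G] [DecidableEq G] [Ring R]

/-!
Let `I - K - ⋯ - J` be a walk. Unless `I ∩ J` or `K ∩ J` is nonzero (and then `I` and `J` are at
distance at most 2), the modular law gives a dichotomy: either `(I ∩ K) + J` is a proper graded
ideal, hence a common neighbour of `I` and `J`, or `(I ∩ K) + J = R` and
`K = (I ∩ K) + (J ∩ K) ⊆ I`. In the latter case the vertex after `K` on the walk is `I` or a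
neighbour of `I`, so `I` may take the place of `K`, and induction along the walk concludes.
-/

theorem le_of_inf_sup_eq_top_of_inf_eq_bot {α : Type*} [Lattice α] [BoundedOrder α]
    [IsModularLattice α] {a b c : α} (htop : a ⊓ b ⊔ c = ⊤) (hbot : b ⊓ c = ⊥) : b ≤ a := by
  have hb : b = a ⊓ b :=
    calc b = (a ⊓ b ⊔ c) ⊓ b := by rw [htop, top_inf_eq]
      _ = a ⊓ b ⊔ c ⊓ b := sup_inf_assoc_of_le c inf_le_right
      _ = a ⊓ b := by rw [inf_comm c, hbot, sup_bot_eq]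
  exact inf_eq_right.mp hb.symm

namespace hV

variable {𝒜 : G → AddSubgroup R} [GradedRing 𝒜] {I J : Ideal R}

theorem inf_mem (hI : I ∈ hV 𝒜) (hJ : J ∈ hV 𝒜) (hIJ : I ⊓ J ≠ ⊥) : I ⊓ J ∈ hV 𝒜 :=
  ⟨hIJ, ne_top_of_le_ne_top hI.2.1 inf_le_left, hI.2.2.inf hJ.2.2⟩

theorem sup_mem (hI : I ∈ hV 𝒜) (hJ : J ∈ hV 𝒜) (hIJ : I ⊔ J ≠ ⊤) : I ⊔ J ∈ hV 𝒜 :=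
  ⟨ne_bot_of_le_ne_bot hI.1 le_sup_left, hIJ, hI.2.2.sup hJ.2.2⟩

end hV

namespace interGraph

variable {V : Set (Ideal R)}

theorem adj_of_le_of_le {I J : V} {A : Ideal R} (hA : A ≠ ⊥) (hAI : A ≤ I) (hAJ : A ≤ J)
    (hIJ : I ≠ J) : (interGraph V).Adj I J :=
  ⟨hIJ, ne_bot_of_le_ne_bot hA (le_inf hAI hAJ)⟩

theorem edist_le_one_of_inf_ne_bot {I J : V} (hIJ : (I : Ideal R) ⊓ J ≠ ⊥) :
    (interGraph V).edist I J ≤ 1 := by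
  by_cases h : I = J
  · simp [h]
  · have hadj : (interGraph V).Adj I J := ⟨h, hIJ⟩
    exact (SimpleGraph.edist_eq_one_iff_adj.mpr hadj).le

theorem edist_le_two_of_adj_of_adj {I K J : V} (hIK : (interGraph V).Adj I K)
    (hKJ : (interGraph V).Adj K J) : (interGraph V).edist I J ≤ 2 :=
  calc (interGraph V).edist I J ≤ (interGraph V).edist I K + (interGraph V).edist K J :=
        SimpleGraph.edist_triangle
    _ = 2 := by
        rw [SimpleGraph.edist_eq_one_iff_adj.mpr hIK, SimpleGraph.edist_eq_one_iff_adj.mpr hKJ]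
        rfl

end interGraph

section

open interGraph

variable {𝒜 : G → AddSubgroup R} [GradedRing 𝒜]

theorem edist_le_two_or_le_of_adj {I K : hV 𝒜} (hIK : (interGraph (hV 𝒜)).Adj I K)
    (J : hV 𝒜) : (interGraph (hV 𝒜)).edist I J ≤ 2 ∨ (K : Ideal R) ≤ I := by
  by_cases hIJ : (I : Ideal R) ⊓ J = ⊥
  swap
  · exact .inl ((edist_le_one_of_inf_ne_bot hIJ).trans one_le_two)
  by_cases hKJ : (K : Ideal R) ⊓ J = ⊥
  swap
  · exact .inl (edist_le_two_of_adj_of_adj hIK ⟨fun h => hIK.2 (h ▸ hIJ), hKJ⟩)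
  by_cases htop : (I : Ideal R) ⊓ K ⊔ J = ⊤
  · exact .inr (le_of_inf_sup_eq_top_of_inf_eq_bot htop hKJ)
  left
  let M : hV 𝒜 := ⟨_, hV.sup_mem (hV.inf_mem I.2 K.2 hIK.2) J.2 htop⟩
  have hJ_le_M : (J : Ideal R) ≤ M := le_sup_right
  have hIM : (interGraph (hV 𝒜)).Adj I M := by
    refine adj_of_le_of_le hIK.2 inf_le_left le_sup_left fun h => J.2.1 ?_
    exact le_bot_iff.mp (hIJ ▸ le_inf (h ▸ hJ_le_M) le_rfl)
  have hMJ : (interGraph (hV 𝒜)).Adj M J := by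
    refine adj_of_le_of_le J.2.1 hJ_le_M le_rfl fun h => hIK.2 ?_
    exact le_bot_iff.mp (hIJ ▸ le_inf inf_le_left (h ▸ le_sup_left))
  exact edist_le_two_of_adj_of_adj hIM hMJ

theorem edist_le_two_of_walk {K J : hV 𝒜} (p : (interGraph (hV 𝒜)).Walk K J) (I : hV 𝒜)
    (hKI : (K : Ideal R) ≤ I) : (interGraph (hV 𝒜)).edist I J ≤ 2 := by
  induction p generalizing I with
  | @nil K =>
    refine (edist_le_one_of_inf_ne_bot ?_).trans one_le_two
    rw [inf_eq_right.mpr hKI]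
    exact K.2.1
  | @cons K L J hKL p ih =>
    by_cases hIL : I = L
    · exact ih I (hIL ▸ le_rfl)
    · have hadj := adj_of_le_of_le hKL.2 (inf_le_left.trans hKI) inf_le_right hIL
      exact (edist_le_two_or_le_of_adj hadj J).elim id (ih I)

end

/-- If the intersection graph of graded left ideals is connected,
then its diameter is at most 2 (every pair of vertices is at distance ≤ 2). -/
theorem stmt3 (𝒜 : G → AddSubgroup R) [GradedRing 𝒜]
    (h : (interGraph (hV 𝒜)).Connected) :
    ∀ I J : hV 𝒜, (interGraph (hV 𝒜)).edist I J ≤ 2 :=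
  fun I J => edist_le_two_of_walk (h I J).some I le_rfl
end

section
/- Let R be a G-graded ring. If the clique number of the intersection graph of graded left ideals Gr_G(R) is finite, then R is G-graded Artinian (satisfies the descending chain condition on graded left ideals). -/
variable {G R : Type*} [AddGroup G] [DecidableEq G] [Ring R]

/-- The clique number of a simple graph, as an extended natural number. -/
noncomputable def cliqueNumE {V : Type*} (Γ : SimpleGraph V) : ℕ∞ :=
  ⨆ s : {s : Finset V // Γ.IsClique (s : Set V)}, ((s : Finset V).card : ℕ∞)

/-
A strictly descending chain of graded left ideals, with its first member dropped, consists of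
nonzero proper graded left ideals, and any two nested nonzero ideals meet in the smaller one, so
the chain is an infinite clique of `Gr_G(R)`. Hence finite clique number forces the graded left
ideals to be well-founded under `<`, which is the descending chain condition.
-/

theorem cliqueNumE_eq_top_of_isClique_infinite {V : Type*} {Γ : SimpleGraph V} {s : Set V}
    (hs : Γ.IsClique s) (hinf : s.Infinite) : cliqueNumE Γ = ⊤ := by
  refine ENat.eq_top_iff_forall_ge.2 fun n => ?_
  obtain ⟨t, hts, rfl⟩ := hinf.exists_subset_card_eq n
  exact le_iSup_of_le (ι := {s : Finset V // Γ.IsClique (s : Set V)}) ⟨t, hs.subset hts⟩ le_rfl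

theorem isClique_interGraph_of_isChain {V : Set (Ideal R)} (hV : ⊥ ∉ V) {s : Set V}
    (hs : IsChain (· ≤ ·) s) : (interGraph V).IsClique s := by
  intro I hI J hJ hIJ
  refine ⟨hIJ, ?_⟩
  rcases hs hI hJ hIJ with hle | hle
  · rw [inf_eq_left.2 hle]
    exact fun h => hV (h ▸ I.2)
  · rw [inf_eq_right.2 hle]
    exact fun h => hV (h ▸ J.2)

theorem cliqueNumE_interGraph_eq_top_of_strictAnti (𝒜 : G → AddSubgroup R) [GradedRing 𝒜]
    {f : ℕ → Ideal R} (hf : StrictAnti f) (hhom : ∀ n, (f n).IsHomogeneous 𝒜) :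
    cliqueNumE (interGraph (hV 𝒜)) = ⊤ := by
  let v : ℕ → hV 𝒜 := fun n =>
    ⟨f (n + 1), ne_bot_of_gt (hf (n + 1).lt_succ_self), (hf n.lt_succ_self).ne_top, hhom _⟩
  have hv : StrictAnti v := fun _ _ hmn => hf (Nat.succ_lt_succ hmn)
  exact cliqueNumE_eq_top_of_isClique_infinite
    (isClique_interGraph_of_isChain (fun h => h.1 rfl) hv.antitone.isChain_range)
    (Set.infinite_range_of_injective hv.injective)

theorem wellFoundedLT_isHomogeneous_of_cliqueNumE_lt_top (𝒜 : G → AddSubgroup R) [GradedRing 𝒜]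
    (h : cliqueNumE (interGraph (hV 𝒜)) < ⊤) :
    WellFoundedLT {I : Ideal R // I.IsHomogeneous 𝒜} :=
  Set.isWF_univ_iff.1 <| Set.isWF_iff_no_descending_seq.2 fun f hf _ => h.ne <|
    cliqueNumE_interGraph_eq_top_of_strictAnti 𝒜 (Subtype.strictMono_coe _ |>.comp_strictAnti hf)
      fun n => (f n).2

/-- If the clique number of the intersection graph of graded left
ideals is finite, then `R` is `G`-graded Artinian (DCC on graded left ideals). -/
theorem stmt7 (𝒜 : G → AddSubgroup R) [GradedRing 𝒜]
    (h : cliqueNumE (interGraph (hV 𝒜)) < ⊤) :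
    ∀ f : ℕ → Ideal R, (∀ n, Ideal.IsHomogeneous 𝒜 (f n)) →
      (∀ n, f (n + 1) ≤ f n) → ∃ n, ∀ m, n ≤ m → f m = f n := by
  intro f hhom hdec
  have := wellFoundedLT_isHomogeneous_of_cliqueNumE_lt_top 𝒜 h
  let F : ℕ → {I : Ideal R // I.IsHomogeneous 𝒜} := fun n => ⟨f n, hhom n⟩
  obtain ⟨n, hn⟩ := WellFoundedLT.antitone_chain_condition (f := F) (antitone_nat_of_succ_le hdec)
  exact ⟨n, fun m hm => congrArg Subtype.val (hn m hm).symm⟩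
end

section
/- Let (R,G) be a left e-faithful graded ring (where e is the identity of G). The relation I ∼ J defined by I ∩ R_e = J ∩ R_e is an equivalence relation on the vertices of Gr_G(R), and the quotient graph of Gr_G(R) by ∼ is isomorphic to the intersection graph G(R_e) of left ideals of the subring R_e, via the map sending a left ideal I_e of R_e to the class of the graded left ideal R·I_e. -/
variable {G R : Type*} [AddGroup G] [DecidableEq G] [Ring R]

/-- The quotient graph of a simple graph by an equivalence relation on its
vertices: two classes are adjacent iff they are distinct and contain adjacent
representatives. -/
def quotGraph {V : Type*} (Γ : SimpleGraph V) (s : Setoid V) : SimpleGraph (Quotient s) where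
  Adj x y := x ≠ y ∧ ∃ u v : V, Quotient.mk s u = x ∧ Quotient.mk s v = y ∧ Γ.Adj u v
  symm := ⟨fun x y ⟨h1, u, v, hu, hv, h⟩ => ⟨h1.symm, v, u, hv, hu, h.symm⟩⟩
  loopless := ⟨fun x ⟨h1, _⟩ => h1 rfl⟩

/-- The setoid on graded left ideals given by `I ∼ J ↔ I ∩ R_e = J ∩ R_e`. -/
def eKer (𝒜 : G → AddSubgroup R) [GradedRing 𝒜] : Setoid (hV 𝒜) :=
  Setoid.ker fun I : hV 𝒜 => ((I : Ideal R) : Set R) ∩ (𝒜 0 : Set R)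

/-- The set of proper nontrivial left ideals of the identity component `R_e = 𝒜 0`. -/
def V0 (𝒜 : G → AddSubgroup R) [GradedRing 𝒜] : Set (Ideal ↥(𝒜 0)) :=
  {I | I ≠ ⊥ ∧ I ≠ ⊤}

/-!
Restriction `J ↦ J ∩ R_e` and extension `I_e ↦ R · I_e` connect graded left ideals of `R` with
left ideals of `R_e`. Restriction undoes extension, since the degree-`e` component of
`∑ rᵢ xᵢ` with `xᵢ ∈ I_e` is `∑ (rᵢ)_e xᵢ ∈ I_e`. Left `e`-faithfulness moves a nonzero
homogeneous component of a nonzero graded left ideal into degree `e`, so restriction keeps graded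
ideals nonzero; applied to `K ⊓ L` this gives `K ⊓ L ≠ 0 ↔ (K ∩ R_e) ⊓ (L ∩ R_e) ≠ 0`. Thus
restriction is a surjection from `Gr_G(R)` onto `G(R_e)` whose fibres are the `∼`-classes and
which preserves and reflects adjacency between different classes, so it descends to an
isomorphism of the quotient graph with `G(R_e)`, inverse to `I_e ↦ [R · I_e]`.
-/

theorem quotGraph_ker_adj_mk_iff {V W : Type*} {Γ : SimpleGraph V} {Γ' : SimpleGraph W}
    {g : V → W} (hadj : ∀ u v, g u ≠ g v → (Γ.Adj u v ↔ Γ'.Adj (g u) (g v))) (u v : V) :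
    (quotGraph Γ (Setoid.ker g)).Adj ⟦u⟧ ⟦v⟧ ↔ Γ'.Adj (g u) (g v) := by
  constructor
  · rintro ⟨hne, u', v', hu, hv, huv⟩
    have hu' : g u' = g u := Quotient.exact hu
    have hv' : g v' = g v := Quotient.exact hv
    have hg : g u' ≠ g v' := fun h => hne (hu ▸ hv ▸ Quotient.sound h)
    rw [← hu', ← hv']
    exact (hadj u' v' hg).mp huv
  · intro h
    have hg : g u ≠ g v := Γ'.ne_of_adj h
    exact ⟨fun huv => hg (Quotient.exact huv), u, v, rfl, rfl, (hadj u v hg).mpr h⟩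

theorem exists_iso_quotGraph_of_rightInverse {V W : Type*} {Γ : SimpleGraph V}
    {Γ' : SimpleGraph W} {s : Setoid V} {g : V → W} {f : W → V}
    (hgf : Function.RightInverse f g) (hs : ∀ u v, s u v ↔ g u = g v)
    (hadj : ∀ u v, g u ≠ g v → (Γ.Adj u v ↔ Γ'.Adj (g u) (g v))) :
    ∃ φ : Γ' ≃g quotGraph Γ s, ∀ w v, φ w = Quotient.mk s v ↔ g v = w := by
  obtain rfl : s = Setoid.ker g := Setoid.ext hs
  refine ⟨⟨(Setoid.quotientKerEquivOfRightInverse g f hgf).symm, ?_⟩, fun w v => ?_⟩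
  · intro w₁ w₂
    simpa only [Setoid.quotientKerEquivOfRightInverse_symm_apply, hgf _]
      using quotGraph_ker_adj_mk_iff hadj (f w₁) (f w₂)
  · show ⟦f w⟧ = ⟦v⟧ ↔ g v = w
    rw [Quotient.eq, Setoid.ker_def, hgf w, eq_comm]

section GradeZero

variable (𝒜 : G → AddSubgroup R) [GradedRing 𝒜]

def gradeZeroSubtype : 𝒜 0 →+* R := (SetLike.GradeZero.subring 𝒜).subtype

@[simp]
theorem gradeZeroSubtype_apply (x : 𝒜 0) : gradeZeroSubtype 𝒜 x = x := rfl

theorem comap_map_gradeZeroSubtype (I : Ideal (𝒜 0)) :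
    (I.map (gradeZeroSubtype 𝒜)).comap (gradeZeroSubtype 𝒜) = I := by
  refine le_antisymm (fun x hx => ?_) Ideal.le_comap_map
  -- `(r * z)₀ = r₀ * z` for `z ∈ 𝒜 0`; quantifying over all left factors `r` makes the claim
  -- stable under the `smul` step of the span induction.
  have key : ∀ y ∈ I.map (gradeZeroSubtype 𝒜), ∀ r : R, DirectSum.decompose 𝒜 (r * y) 0 ∈ I := by
    intro y hy
    induction hy using Submodule.span_induction with
    | mem y hy =>
      obtain ⟨z, hz, rfl⟩ := hy
      intro r
      rw [gradeZeroSubtype_apply]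
      have hproj : DirectSum.decompose 𝒜 (r * z) 0 = DirectSum.decompose 𝒜 r 0 * z :=
        Subtype.ext (DirectSum.coe_decompose_mul_of_right_mem_zero 𝒜 z.2)
      rw [hproj]
      exact I.mul_mem_left _ hz
    | zero => simp
    | add y₁ y₂ _ _ h₁ h₂ =>
      intro r
      rw [mul_add, DirectSum.decompose_add, DirectSum.add_apply]
      exact I.add_mem (h₁ r) (h₂ r)
    | smul a y _ h =>
      intro r
      rw [smul_eq_mul, ← mul_assoc]
      exact h (r * a)
  simpa using key _ hx 1

theorem coe_inter_gradeZero (J : Ideal R) :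
    (J : Set R) ∩ (𝒜 0 : Set R) = Subtype.val '' (J.comap (gradeZeroSubtype 𝒜) : Set (𝒜 0)) := by
  ext z
  constructor
  · rintro ⟨hz, hz0⟩
    exact ⟨⟨z, hz0⟩, hz, rfl⟩
  · rintro ⟨x, hx, rfl⟩
    exact ⟨hx, x.2⟩

theorem map_gradeZeroSubtype_mem_hV {I : Ideal (𝒜 0)} (hI : I ∈ V0 𝒜) :
    I.map (gradeZeroSubtype 𝒜) ∈ hV 𝒜 := by
  obtain ⟨hI0, hI1⟩ := hI
  refine ⟨?_, fun h => hI1 ?_, ?_⟩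
  · exact (Ideal.map_eq_bot_iff_of_injective Subtype.val_injective).not.mpr hI0
  · rw [← comap_map_gradeZeroSubtype 𝒜 I, h, Ideal.comap_top]
  · exact Ideal.homogeneous_span 𝒜 _ (by rintro _ ⟨x, _, rfl⟩; exact ⟨0, x.2⟩)

def IsLeftEFaithful : Prop :=
  ∀ τ : G, ∀ x ∈ 𝒜 τ, x ≠ 0 → ∃ r ∈ 𝒜 (-τ), r * x ≠ 0

variable {𝒜}

theorem IsLeftEFaithful.comap_eq_bot_iff (h𝒜 : IsLeftEFaithful 𝒜) {K : Ideal R}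
    (hK : K.IsHomogeneous 𝒜) : K.comap (gradeZeroSubtype 𝒜) = ⊥ ↔ K = ⊥ := by
  refine ⟨fun hK0 => ?_, fun h => h ▸ Ideal.comap_bot_of_injective _ Subtype.val_injective⟩
  by_contra hK0'
  obtain ⟨z, hzK, hz0⟩ := Submodule.exists_mem_ne_zero_of_ne_bot hK0'
  obtain ⟨τ, hτ⟩ : ∃ τ, (DirectSum.decompose 𝒜 z τ : R) ≠ 0 := by
    classical
    by_contra! h
    apply hz0
    rw [← DirectSum.sum_support_decompose 𝒜 z]
    exact Finset.sum_eq_zero fun τ _ => h τ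
  obtain ⟨r, hr, hrz⟩ := h𝒜 τ _ (DirectSum.decompose 𝒜 z τ).2 hτ
  have hdeg : r * DirectSum.decompose 𝒜 z τ ∈ 𝒜 0 := by
    simpa using SetLike.mul_mem_graded hr (DirectSum.decompose 𝒜 z τ).2
  have hmem : (⟨_, hdeg⟩ : 𝒜 0) ∈ K.comap (gradeZeroSubtype 𝒜) := K.mul_mem_left r (hK τ hzK)
  rw [hK0] at hmem
  exact hrz (congrArg Subtype.val hmem)

theorem IsLeftEFaithful.comap_mem_V0 (h𝒜 : IsLeftEFaithful 𝒜) {J : Ideal R} (hJ : J ∈ hV 𝒜) :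
    J.comap (gradeZeroSubtype 𝒜) ∈ V0 𝒜 :=
  ⟨(h𝒜.comap_eq_bot_iff hJ.2.2).not.mpr hJ.1, Ideal.comap_ne_top _ hJ.2.1⟩

def extendV (I : V0 𝒜) : hV 𝒜 :=
  ⟨_, map_gradeZeroSubtype_mem_hV 𝒜 I.2⟩

def IsLeftEFaithful.restrictV (h𝒜 : IsLeftEFaithful 𝒜) (J : hV 𝒜) : V0 𝒜 :=
  ⟨_, h𝒜.comap_mem_V0 J.2⟩

theorem IsLeftEFaithful.coe_restrictV (h𝒜 : IsLeftEFaithful 𝒜) (J : hV 𝒜) :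
    (h𝒜.restrictV J : Ideal (𝒜 0)) = (J : Ideal R).comap (gradeZeroSubtype 𝒜) :=
  rfl

theorem IsLeftEFaithful.restrictV_extendV (h𝒜 : IsLeftEFaithful 𝒜) :
    Function.RightInverse extendV h𝒜.restrictV :=
  fun I => Subtype.ext (comap_map_gradeZeroSubtype 𝒜 I)

theorem IsLeftEFaithful.restrictV_eq_iff (h𝒜 : IsLeftEFaithful 𝒜) (J : hV 𝒜) (I : V0 𝒜) :
    h𝒜.restrictV J = I ↔
      ((J : Ideal R) : Set R) ∩ (𝒜 0 : Set R) = Subtype.val '' ((I : Ideal (𝒜 0)) : Set (𝒜 0)) := by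
  rw [coe_inter_gradeZero, (Set.image_injective.mpr Subtype.val_injective).eq_iff,
    SetLike.coe_set_eq, Subtype.ext_iff, h𝒜.coe_restrictV]

theorem IsLeftEFaithful.eKer_iff (h𝒜 : IsLeftEFaithful 𝒜) (I J : hV 𝒜) :
    eKer 𝒜 I J ↔ h𝒜.restrictV I = h𝒜.restrictV J := by
  rw [h𝒜.restrictV_eq_iff, h𝒜.coe_restrictV, ← coe_inter_gradeZero]
  exact Setoid.ker_def

theorem IsLeftEFaithful.interGraph_adj_iff (h𝒜 : IsLeftEFaithful 𝒜) {u v : hV 𝒜}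
    (huv : h𝒜.restrictV u ≠ h𝒜.restrictV v) :
    (interGraph (hV 𝒜)).Adj u v ↔ (interGraph (V0 𝒜)).Adj (h𝒜.restrictV u) (h𝒜.restrictV v) := by
  have hne : u ≠ v := fun h => huv (h ▸ rfl)
  show u ≠ v ∧ _ ↔ _ ≠ _ ∧ _
  rw [and_iff_right hne, and_iff_right huv, Ne, Ne, ← h𝒜.comap_eq_bot_iff (u.2.2.2.inf v.2.2.2),
    Ideal.comap_inf, ← h𝒜.coe_restrictV, ← h𝒜.coe_restrictV]

end GradeZero

/-- For a left `e`-faithful grading, `I ∼ J ↔ I ∩ R_e = J ∩ R_e` is an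
equivalence relation on the vertices of `Gr_G(R)`, and the quotient graph of
`Gr_G(R)` by `∼` is isomorphic to the intersection graph `G(R_e)` of left ideals of
`R_e`, via the map sending `I_e` to the class of `R·I_e` (characterized by: the class
of `φ I_e` consists exactly of the graded ideals `J` with `J ∩ R_e = I_e`). -/
theorem stmt12 (𝒜 : G → AddSubgroup R) [GradedRing 𝒜]
    (hfaith : ∀ (τ : G), ∀ x ∈ 𝒜 τ, x ≠ 0 → ∃ r ∈ 𝒜 (-τ), r * x ≠ 0) :
    (Equivalence fun I J : hV 𝒜 =>
        ((I : Ideal R) : Set R) ∩ (𝒜 0 : Set R) = ((J : Ideal R) : Set R) ∩ (𝒜 0 : Set R)) ∧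
    ∃ φ : interGraph (V0 𝒜) ≃g quotGraph (interGraph (hV 𝒜)) (eKer 𝒜),
      ∀ (Ie : V0 𝒜) (J : hV 𝒜),
        φ Ie = Quotient.mk (eKer 𝒜) J ↔
          ((J : Ideal R) : Set R) ∩ (𝒜 0 : Set R) =
            Subtype.val '' (((Ie : Ideal ↥(𝒜 0)) : Set ↥(𝒜 0))) := by
  have h𝒜 : IsLeftEFaithful 𝒜 := hfaith
  obtain ⟨φ, hφ⟩ := exists_iso_quotGraph_of_rightInverse h𝒜.restrictV_extendV h𝒜.eKer_iff
    fun _ _ => h𝒜.interGraph_adj_iff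
  exact ⟨(eKer 𝒜).iseqv, φ, fun Ie J => (hφ Ie J).trans (h𝒜.restrictV_eq_iff J Ie)⟩
end

section
/- Let G be an ordered group and R a G-graded ring with supp(R,G) well-ordered. Then the intersection graph of graded left ideals Gr_G(R) is connected if and only if the intersection graph of all left ideals G(R) is connected. -/
set_option linter.unusedSectionVars false
set_option maxHeartbeats 1000000
variable {G R : Type*} [AddGroup G] [DecidableEq G] [Ring R]

open scoped Classical

open DirectSum

section Top
variable [LinearOrder G] (𝒜 : G → AddSubgroup R) [GradedRing 𝒜]

lemma my_decompose_sub (x y : R) :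
    decompose 𝒜 (x - y) = decompose 𝒜 x - decompose 𝒜 y :=
  map_sub (decomposeAddEquiv 𝒜) x y

lemma support_nonempty {x : R} (hx : x ≠ 0) :
    (decompose 𝒜 x).support.Nonempty := by
  rw [Finset.nonempty_iff_ne_empty, Ne, DFinsupp.support_eq_empty]
  intro h
  apply hx
  have := congrArg (DirectSum.decompose 𝒜).symm h
  simpa using this

/-- top degree of a nonzero element (junk value 0 for 0) -/
noncomputable def tdeg (x : R) : G :=
  if h : (decompose 𝒜 x).support.Nonempty then (decompose 𝒜 x).support.max' h else 0

lemma tdeg_spec' {x : R} (hx : x ≠ 0) :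
    decompose 𝒜 x (tdeg 𝒜 x) ≠ 0 := by
  have h : tdeg 𝒜 x = (decompose 𝒜 x).support.max' (support_nonempty 𝒜 hx) := by
    rw [tdeg, dif_pos (support_nonempty 𝒜 hx)]
  rw [h, ← DFinsupp.mem_support_iff]
  exact Finset.max'_mem _ _

lemma tdeg_spec {x : R} (hx : x ≠ 0) :
    ((decompose 𝒜 x (tdeg 𝒜 x) : 𝒜 (tdeg 𝒜 x)) : R) ≠ 0 := by
  have := tdeg_spec' 𝒜 hx
  simpa [ZeroMemClass.coe_eq_zero] using this

lemma le_tdeg {x : R} (hx : x ≠ 0) {γ : G}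
    (h : ((decompose 𝒜 x γ : 𝒜 γ) : R) ≠ 0) : γ ≤ tdeg 𝒜 x := by
  have h' : tdeg 𝒜 x = (decompose 𝒜 x).support.max' (support_nonempty 𝒜 hx) := by
    rw [tdeg, dif_pos (support_nonempty 𝒜 hx)]
  rw [h']
  apply Finset.le_max'
  rw [DFinsupp.mem_support_iff]
  simpa [ZeroMemClass.coe_eq_zero] using h

lemma decompose_eq_zero_of_gt {x : R} (hx : x ≠ 0) {γ : G} (h : tdeg 𝒜 x < γ) :
    ((decompose 𝒜 x γ : 𝒜 γ) : R) = 0 := by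
  by_contra hc
  exact absurd (le_tdeg 𝒜 hx hc) (not_le.mpr h)

/-- the top (highest-degree homogeneous) component of `x`. -/
noncomputable def htop (x : R) : R := ((decompose 𝒜 x (tdeg 𝒜 x) : 𝒜 (tdeg 𝒜 x)) : R)

lemma htop_ne_zero {x : R} (hx : x ≠ 0) : htop 𝒜 x ≠ 0 := tdeg_spec 𝒜 hx

lemma htop_mem (x : R) : htop 𝒜 x ∈ 𝒜 (tdeg 𝒜 x) := SetLike.coe_mem _

lemma tdeg_mem {x : R} (hx : x ≠ 0) : 𝒜 (tdeg 𝒜 x) ≠ ⊥ := by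
  intro h
  exact htop_ne_zero 𝒜 hx ((AddSubgroup.eq_bot_iff_forall _).mp h _ (htop_mem 𝒜 x))

lemma lt_tdeg_of_forall {y : R} (hy : y ≠ 0) {σ : G}
    (h : ∀ γ, σ ≤ γ → ((decompose 𝒜 y γ : 𝒜 γ) : R) = 0) : tdeg 𝒜 y < σ := by
  by_contra hc
  exact tdeg_spec 𝒜 hy (h _ (not_lt.mp hc))

lemma decompose_sub_htop {x : R} (hx : x ≠ 0) {γ : G} (h : tdeg 𝒜 x ≤ γ) :
    ((decompose 𝒜 (x - htop 𝒜 x) γ : 𝒜 γ) : R) = 0 := by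
  rw [my_decompose_sub]
  rcases eq_or_lt_of_le h with rfl | hlt
  · simp [htop, DirectSum.decompose_coe, DirectSum.of_eq_same]
  · rw [DFinsupp.sub_apply, AddSubgroupClass.coe_sub,
      decompose_eq_zero_of_gt 𝒜 hx hlt]
    have : ((decompose 𝒜 (htop 𝒜 x) γ : 𝒜 γ) : R) = 0 :=
      DirectSum.decompose_of_mem_ne 𝒜 (htop_mem 𝒜 x) (ne_of_lt hlt)
    rw [this]
    simp

lemma tdeg_sub_htop_lt {x : R} (hx : x ≠ 0) (hx' : x - htop 𝒜 x ≠ 0) :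
    tdeg 𝒜 (x - htop 𝒜 x) < tdeg 𝒜 x :=
  lt_tdeg_of_forall 𝒜 hx' fun _ h => decompose_sub_htop 𝒜 hx h

end Top
open DirectSum

section Comp
variable (𝒜 : G → AddSubgroup R) [GradedRing 𝒜]

/-- component of a product with homogeneous right factor -/
lemma gcomp_mul_right {w : R} {τ : G} (hw : w ∈ 𝒜 τ) (r : R) (γ : G) :
    ((decompose 𝒜 (r * w) γ : 𝒜 γ) : R)
      = ((decompose 𝒜 r (γ - τ) : 𝒜 (γ - τ)) : R) * w := by
  induction r using DirectSum.Decomposition.inductionOn 𝒜 with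
  | zero => simp
  | @homogeneous δ m =>
    rcases eq_or_ne γ (δ + τ) with rfl | hne
    · rw [DirectSum.decompose_of_mem_same 𝒜 (SetLike.mul_mem_graded m.2 hw)]
      rw [add_sub_cancel_right, DirectSum.decompose_of_mem_same 𝒜 m.2]
    · rw [DirectSum.decompose_of_mem_ne 𝒜 (SetLike.mul_mem_graded m.2 hw) (Ne.symm hne)]
      rw [DirectSum.decompose_of_mem_ne 𝒜 m.2 (fun h => hne (by rw [h, sub_add_cancel]))]
      simp
  | add a b ha hb =>
    rw [add_mul, DirectSum.decompose_add, DirectSum.decompose_add, DFinsupp.add_apply,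
      DFinsupp.add_apply, AddSubgroup.coe_add, AddSubgroup.coe_add, ha, hb, add_mul]

/-- component of a product with homogeneous left factor -/
lemma gcomp_mul_left {w : R} {τ : G} (hw : w ∈ 𝒜 τ) (r : R) (γ : G) :
    ((decompose 𝒜 (w * r) γ : 𝒜 γ) : R)
      = w * ((decompose 𝒜 r (-τ + γ) : 𝒜 (-τ + γ)) : R) := by
  induction r using DirectSum.Decomposition.inductionOn 𝒜 with
  | zero => simp
  | @homogeneous δ m =>
    rcases eq_or_ne γ (τ + δ) with rfl | hne
    · rw [DirectSum.decompose_of_mem_same 𝒜 (SetLike.mul_mem_graded hw m.2)]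
      rw [neg_add_cancel_left, DirectSum.decompose_of_mem_same 𝒜 m.2]
    · rw [DirectSum.decompose_of_mem_ne 𝒜 (SetLike.mul_mem_graded hw m.2) (Ne.symm hne)]
      rw [DirectSum.decompose_of_mem_ne 𝒜 m.2 (fun h => hne (by rw [h, add_neg_cancel_left]))]
      simp
  | add a b ha hb =>
    rw [mul_add, DirectSum.decompose_add, DirectSum.decompose_add, DFinsupp.add_apply,
      DFinsupp.add_apply, AddSubgroup.coe_add, AddSubgroup.coe_add, ha, hb, mul_add]

end Comp

lemma decompose_coe_congr (𝒜 : G → AddSubgroup R) [GradedRing 𝒜] (r : R) {γ γ' : G}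
    (h : γ = γ') : ((decompose 𝒜 r γ : 𝒜 γ) : R) = ((decompose 𝒜 r γ' : 𝒜 γ') : R) := by
  subst h; rfl

section Tilde
variable [LinearOrder G]
variable [CovariantClass G G (· + ·) (· < ·)]
variable [CovariantClass G G (Function.swap (· + ·)) (· < ·)]
variable (𝒜 : G → AddSubgroup R) [GradedRing 𝒜]

/-- generators of the leading ideal: tops of nonzero elements of I -/
def tgens (I : Ideal R) : Set R := {t | ∃ x, x ∈ I ∧ x ≠ 0 ∧ t = htop 𝒜 x}

/-- the leading (graded) ideal of I -/
noncomputable def tilde (I : Ideal R) : Ideal R := Ideal.span (tgens 𝒜 I)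

lemma tilde_isHomogeneous (I : Ideal R) : (tilde 𝒜 I).IsHomogeneous 𝒜 := by
  apply Ideal.homogeneous_span
  rintro t ⟨x, -, -, rfl⟩
  exact ⟨tdeg 𝒜 x, htop_mem 𝒜 x⟩

lemma tilde_mono {I J : Ideal R} (h : I ≤ J) : tilde 𝒜 I ≤ tilde 𝒜 J := by
  apply Ideal.span_mono
  rintro t ⟨x, hx, hx0, rfl⟩
  exact ⟨x, h hx, hx0, rfl⟩

lemma htop_mem_tilde {I : Ideal R} {x : R} (hx : x ∈ I) (hx0 : x ≠ 0) :
    htop 𝒜 x ∈ tilde 𝒜 I :=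
  Ideal.subset_span ⟨x, hx, hx0, rfl⟩

lemma tilde_ne_bot {I : Ideal R} (h : I ≠ ⊥) : tilde 𝒜 I ≠ ⊥ := by
  obtain ⟨x, hx, hx0⟩ := (Submodule.ne_bot_iff I).mp h
  exact (Submodule.ne_bot_iff _).mpr
    ⟨htop 𝒜 x, htop_mem_tilde 𝒜 hx hx0, htop_ne_zero 𝒜 hx0⟩

/-- a homogeneous ideal equals its leading ideal -/
lemma tilde_of_isHomogeneous (hwo : {σ : G | 𝒜 σ ≠ ⊥}.IsWF) {I : Ideal R} (hI : I.IsHomogeneous 𝒜) :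
    tilde 𝒜 I = I := by
  apply le_antisymm
  · rw [tilde, Ideal.span_le]
    rintro t ⟨x, hx, hx0, rfl⟩
    exact hI _ hx
  · -- every element of I lies in tilde I; minimal counterexample on top degree
    by_contra hc
    rw [SetLike.not_le_iff_exists] at hc
    obtain ⟨x₁, hx₁I, hx₁⟩ := hc
    set T : Set G := {σ | ∃ x, x ∈ I ∧ x ∉ tilde 𝒜 I ∧ x ≠ 0 ∧ tdeg 𝒜 x = σ} with hT
    have hTsub : T ⊆ {σ : G | 𝒜 σ ≠ ⊥} := by
      rintro σ ⟨x, -, -, hx0, rfl⟩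
      exact tdeg_mem 𝒜 hx0
    have hTwf : T.IsWF := hwo.mono hTsub
    have hx₁0 : x₁ ≠ 0 := fun h => hx₁ (h ▸ (tilde 𝒜 I).zero_mem)
    have hTne : T.Nonempty := ⟨tdeg 𝒜 x₁, x₁, hx₁I, hx₁, hx₁0, rfl⟩
    obtain ⟨x, hxI, hxT, hx0, hxd⟩ := hTwf.min_mem hTne
    have ht : htop 𝒜 x ∈ tilde 𝒜 I := htop_mem_tilde 𝒜 hxI hx0
    have htI : htop 𝒜 x ∈ I := hI _ hxI
    have hx' : x - htop 𝒜 x ∈ I := I.sub_mem hxI htI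
    have hx'nt : x - htop 𝒜 x ∉ tilde 𝒜 I := by
      intro h
      exact hxT (by simpa using (tilde 𝒜 I).add_mem h ht)
    have hx'0 : x - htop 𝒜 x ≠ 0 := by
      intro h
      exact hxT (by rw [sub_eq_zero] at h; rw [h]; exact ht)
    have : tdeg 𝒜 (x - htop 𝒜 x) ∈ T := ⟨_, hx', hx'nt, hx'0, rfl⟩
    exact hTwf.not_lt_min hTne this (hxd ▸ tdeg_sub_htop_lt 𝒜 hx0 hx'0)

/-- KEY: leading ideal is top iff ideal is top -/
lemma tilde_eq_top (hwo : {σ : G | 𝒜 σ ≠ ⊥}.IsWF) {I : Ideal R} (h : tilde 𝒜 I = ⊤) : I = ⊤ := by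
  by_contra hI
  -- minimal counterexample: element not in I of minimal top degree
  set T : Set G := {σ | ∃ x, x ∉ I ∧ ∃ hx0 : x ≠ 0, tdeg 𝒜 x = σ} with hT
  have hTsub : T ⊆ {σ : G | 𝒜 σ ≠ ⊥} := by
    rintro σ ⟨x, -, hx0, rfl⟩
    exact tdeg_mem 𝒜 hx0
  have hTwf : T.IsWF := hwo.mono hTsub
  obtain ⟨x₁, hx₁⟩ : ∃ x₁, x₁ ∉ I := by
    by_contra hcc
    push_neg at hcc
    exact hI (Ideal.eq_top_iff_one I |>.mpr (hcc 1))
  have hx₁0 : x₁ ≠ 0 := fun h => hx₁ (h ▸ I.zero_mem)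
  have hTne : T.Nonempty := ⟨tdeg 𝒜 x₁, x₁, hx₁, hx₁0, rfl⟩
  obtain ⟨x, hxI, hx0, hxd⟩ := hTwf.min_mem hTne
  set σ₀ := tdeg 𝒜 x with hσ₀
  -- expand htop x as a combination of generators
  have htmem : htop 𝒜 x ∈ tilde 𝒜 I := by rw [h]; trivial
  rw [tilde, Ideal.span, Submodule.mem_span_set'] at htmem
  obtain ⟨n, f, g, hsum⟩ := htmem
  -- choose witnesses for each generator
  have hgen : ∀ i : Fin n, ∃ z, z ∈ I ∧ z ≠ 0 ∧ (g i : R) = htop 𝒜 z := fun i => (g i).2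
  choose z hzI hz0 hgz using hgen
  -- the approximating element of I
  set y : R := ∑ i : Fin n,
    ((decompose 𝒜 (f i) (σ₀ - tdeg 𝒜 (z i)) : 𝒜 (σ₀ - tdeg 𝒜 (z i))) : R) * z i with hy
  have hyI : y ∈ I := by
    apply Ideal.sum_mem
    intro i _
    exact I.smul_mem _ (hzI i)
  -- components of x - y vanish in degrees ≥ σ₀
  have hcomp : ∀ γ, σ₀ ≤ γ → ((decompose 𝒜 (x - y) γ : 𝒜 γ) : R) = 0 := by
    intro γ hγ
    rw [my_decompose_sub, DFinsupp.sub_apply, AddSubgroupClass.coe_sub]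
    have hycomp : ((decompose 𝒜 y γ : 𝒜 γ) : R)
        = ∑ i : Fin n,
          ((decompose 𝒜 (f i) (σ₀ - tdeg 𝒜 (z i)) : 𝒜 _) : R)
            * ((decompose 𝒜 (z i) (-(σ₀ - tdeg 𝒜 (z i)) + γ) : 𝒜 _) : R) := by
      rw [hy, DirectSum.decompose_sum, DFinsupp.finset_sum_apply,
        AddSubmonoidClass.coe_finset_sum]
      apply Finset.sum_congr rfl
      intro i _
      exact gcomp_mul_left 𝒜 (SetLike.coe_mem _) (z i) γ
    rcases eq_or_lt_of_le hγ with rfl | hlt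
    · -- degree exactly σ₀ : components agree
      have hx_at : ((decompose 𝒜 x σ₀ : 𝒜 σ₀) : R) = htop 𝒜 x := rfl
      rw [hx_at, hycomp]
      have : ∀ i : Fin n, -(σ₀ - tdeg 𝒜 (z i)) + σ₀ = tdeg 𝒜 (z i) := by
        intro i
        rw [sub_eq_add_neg, neg_add_rev, neg_neg, add_assoc, neg_add_cancel, add_zero]
      have hterm : ∀ i : Fin n,
          ((decompose 𝒜 (f i) (σ₀ - tdeg 𝒜 (z i)) : 𝒜 _) : R)
              * ((decompose 𝒜 (z i) (-(σ₀ - tdeg 𝒜 (z i)) + σ₀) : 𝒜 _) : R)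
            = ((decompose 𝒜 (f i) (σ₀ - tdeg 𝒜 (z i)) : 𝒜 _) : R) * (g i : R) := by
        intro i
        rw [hgz i]
        exact congrArg (fun w => _ * w) (decompose_coe_congr 𝒜 (z i) (this i))
      rw [Finset.sum_congr rfl (fun i _ => hterm i)]
      -- now: htop x = Σ (f i)_{σ₀ - τᵢ} * g i ; take σ₀-component of hsum
      have := congrArg (fun w => ((decompose 𝒜 w σ₀ : 𝒜 σ₀) : R)) hsum
      simp only at this
      rw [DirectSum.decompose_sum, DFinsupp.finset_sum_apply,
        AddSubmonoidClass.coe_finset_sum] at this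
      have hterm2 : ∀ i : Fin n,
          ((decompose 𝒜 (f i • (g i : R)) σ₀ : 𝒜 σ₀) : R)
            = ((decompose 𝒜 (f i) (σ₀ - tdeg 𝒜 (z i)) : 𝒜 _) : R) * (g i : R) := by
        intro i
        rw [smul_eq_mul]
        have hgmem : (g i : R) ∈ 𝒜 (tdeg 𝒜 (z i)) := by rw [hgz i]; exact htop_mem 𝒜 (z i)
        exact gcomp_mul_right 𝒜 hgmem (f i) σ₀
      rw [Finset.sum_congr rfl (fun i _ => hterm2 i)] at this
      rw [this, DirectSum.decompose_of_mem_same 𝒜 (htop_mem 𝒜 x), sub_self]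
    · -- degree > σ₀ : both vanish
      rw [decompose_eq_zero_of_gt 𝒜 hx0 hlt, hycomp]
      have hterm : ∀ i : Fin n,
          ((decompose 𝒜 (f i) (σ₀ - tdeg 𝒜 (z i)) : 𝒜 _) : R)
              * ((decompose 𝒜 (z i) (-(σ₀ - tdeg 𝒜 (z i)) + γ) : 𝒜 _) : R) = 0 := by
        intro i
        have hgt : tdeg 𝒜 (z i) < -(σ₀ - tdeg 𝒜 (z i)) + γ := by
          have h1 : -(σ₀ - tdeg 𝒜 (z i)) + σ₀ = tdeg 𝒜 (z i) := by
            rw [sub_eq_add_neg, neg_add_rev, neg_neg, add_assoc, neg_add_cancel, add_zero]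
          calc tdeg 𝒜 (z i) = -(σ₀ - tdeg 𝒜 (z i)) + σ₀ := h1.symm
            _ < -(σ₀ - tdeg 𝒜 (z i)) + γ := by exact add_lt_add_right hlt _
        rw [decompose_eq_zero_of_gt 𝒜 (hz0 i) hgt, mul_zero]
      rw [Finset.sum_congr rfl (fun i _ => hterm i), Finset.sum_const_zero, sub_zero]
  -- so x - y is a smaller counterexample
  have hxy : x - y ∉ I := fun hcy => hxI (by simpa using I.add_mem hcy hyI)
  have hxy0 : x - y ≠ 0 := fun hcy => hxy (hcy ▸ I.zero_mem)
  have hlt : tdeg 𝒜 (x - y) < σ₀ := lt_tdeg_of_forall 𝒜 hxy0 hcomp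
  exact hTwf.not_lt_min hTne ⟨x - y, hxy, hxy0, rfl⟩ (hxd ▸ hlt)

end Tilde

section GraphUtil

lemma interGraph_adj {V : Set (Ideal R)} (A B : V) :
    (interGraph V).Adj A B ↔ A ≠ B ∧ (A : Ideal R) ⊓ (B : Ideal R) ≠ ⊥ := Iff.rfl

lemma reach_of_inf {V : Set (Ideal R)} (A B : V) (h : (A : Ideal R) ⊓ (B : Ideal R) ≠ ⊥) :
    (interGraph V).Reachable A B := by
  rcases eq_or_ne A B with rfl | hne
  · exact SimpleGraph.Reachable.refl _
  · exact SimpleGraph.Adj.reachable ((interGraph_adj A B).mpr ⟨hne, h⟩)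

/-- the big vertex set : all proper nontrivial left ideals -/
abbrev bigV (R : Type*) [Ring R] : Set (Ideal R) := {I : Ideal R | I ≠ ⊥ ∧ I ≠ ⊤}

/-- Key dichotomy step: if there is an edge `M — N` and a vertex `J` unreachable
from `M`, we get a contradiction. -/
lemma no_edge_of_unreachable {M N J : bigV R}
    (hAdj : (interGraph (bigV R)).Adj M N)
    (hJM : ¬ (interGraph (bigV R)).Reachable M J) : False := by
  have hJN : ¬ (interGraph (bigV R)).Reachable N J :=
    fun h => hJM ((SimpleGraph.Adj.reachable hAdj).trans h)
  have hMJ0 : (M : Ideal R) ⊓ (J : Ideal R) = ⊥ := by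
    by_contra h; exact hJM (reach_of_inf M J h)
  have hNJ0 : (N : Ideal R) ⊓ (J : Ideal R) = ⊥ := by
    by_contra h; exact hJN (reach_of_inf N J h)
  -- sums with J are top
  have hsum : ∀ P : bigV R, (P : Ideal R) ⊓ (J : Ideal R) = ⊥ →
      ¬ (interGraph (bigV R)).Reachable P J → (P : Ideal R) ⊔ (J : Ideal R) = ⊤ := by
    intro P hPJ hPr
    by_contra hne
    have hWbot : (P : Ideal R) ⊔ (J : Ideal R) ≠ ⊥ := fun h => P.2.1 (by
      have := le_sup_left (a := (P : Ideal R)) (b := (J : Ideal R))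
      rw [h, le_bot_iff] at this; exact this)
    set W : bigV R := ⟨(P : Ideal R) ⊔ (J : Ideal R), hWbot, hne⟩ with hW
    apply hPr
    refine (reach_of_inf P W ?_).trans (reach_of_inf W J ?_)
    · show (P : Ideal R) ⊓ ((P : Ideal R) ⊔ (J : Ideal R)) ≠ ⊥
      rw [inf_sup_self]; exact P.2.1
    · show ((P : Ideal R) ⊔ (J : Ideal R)) ⊓ (J : Ideal R) ≠ ⊥
      rw [inf_eq_right.mpr le_sup_right]; exact J.2.1
  have hMJtop := hsum M hMJ0 hJM
  have hNJtop := hsum N hNJ0 hJN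
  have hP0 : (M : Ideal R) ⊓ (N : Ideal R) ≠ ⊥ := hAdj.2
  have hPJ0 : ((M : Ideal R) ⊓ (N : Ideal R)) ⊓ (J : Ideal R) = ⊥ := by
    rw [eq_bot_iff, ← hMJ0]
    exact inf_le_inf_right _ inf_le_left
  by_cases htop : ((M : Ideal R) ⊓ (N : Ideal R)) ⊔ (J : Ideal R) = ⊤
  · -- modular law forces M = M ⊓ N = N
    have hmod : ∀ P : bigV R, (P : Ideal R) ⊓ (J : Ideal R) = ⊥ →
        (M : Ideal R) ⊓ (N : Ideal R) ≤ (P : Ideal R) → (P : Ideal R) = (M : Ideal R) ⊓ (N : Ideal R) := by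
      intro P hPJ hle
      have := sup_inf_assoc_of_le (x := (M : Ideal R) ⊓ (N : Ideal R))
        (y := (J : Ideal R)) (z := (P : Ideal R)) hle
      have hJP : (J : Ideal R) ⊓ (P : Ideal R) = ⊥ := by rw [inf_comm]; exact hPJ
      rw [htop, top_inf_eq, hJP, sup_bot_eq] at this
      exact this
    have hM := hmod M hMJ0 inf_le_left
    have hN := hmod N hNJ0 inf_le_right
    exact hAdj.1 (Subtype.ext (hM.trans hN.symm))
  · -- path M — M⊓N — (M⊓N)⊔J — J
    have hPbot : (M : Ideal R) ⊓ (N : Ideal R) ≠ ⊥ := hP0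
    have hPtop : (M : Ideal R) ⊓ (N : Ideal R) ≠ ⊤ := fun h => M.2.2 (by
      rw [eq_top_iff, ← h]; exact inf_le_left)
    set P : bigV R := ⟨(M : Ideal R) ⊓ (N : Ideal R), hPbot, hPtop⟩ with hPdef
    have hWbot : ((M : Ideal R) ⊓ (N : Ideal R)) ⊔ (J : Ideal R) ≠ ⊥ := fun h => J.2.1 (by
      have := le_sup_right (a := (M : Ideal R) ⊓ (N : Ideal R)) (b := (J : Ideal R))
      rw [h, le_bot_iff] at this; exact this)
    set W : bigV R := ⟨((M : Ideal R) ⊓ (N : Ideal R)) ⊔ (J : Ideal R), hWbot, htop⟩ with hWdef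
    apply hJM
    refine ((reach_of_inf M P ?_).trans (reach_of_inf P W ?_)).trans (reach_of_inf W J ?_)
    · show (M : Ideal R) ⊓ ((M : Ideal R) ⊓ (N : Ideal R)) ≠ ⊥
      rwa [inf_eq_right.mpr inf_le_left]
    · show ((M : Ideal R) ⊓ (N : Ideal R)) ⊓ (((M : Ideal R) ⊓ (N : Ideal R)) ⊔ (J : Ideal R)) ≠ ⊥
      rw [inf_sup_self]; exact hP0
    · show (((M : Ideal R) ⊓ (N : Ideal R)) ⊔ (J : Ideal R)) ⊓ (J : Ideal R) ≠ ⊥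
      rw [inf_eq_right.mpr le_sup_right]; exact J.2.1

/-- If the big intersection graph is not preconnected then it has no edges. -/
lemma edgeless_of_not_preconnected
    (h : ¬ (interGraph (bigV R)).Preconnected) :
    ∀ M N : bigV R, ¬ (interGraph (bigV R)).Adj M N := by
  rw [SimpleGraph.Preconnected] at h
  push_neg at h
  obtain ⟨A, B, hAB⟩ := h
  intro M N hAdj
  by_cases hA : (interGraph (bigV R)).Reachable M A
  · by_cases hB : (interGraph (bigV R)).Reachable M B
    · exact hAB (hA.symm.trans hB)
    · exact no_edge_of_unreachable hAdj hB
  · exact no_edge_of_unreachable hAdj hA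

lemma reachable_eq_of_edgeless {V : Set (Ideal R)}
    (hE : ∀ M N : V, ¬ (interGraph V).Adj M N) {A B : V}
    (h : (interGraph V).Reachable A B) : A = B := by
  obtain ⟨w⟩ := h
  cases w with
  | nil => rfl
  | cons hadj _ => exact absurd hadj (hE _ _)

end GraphUtil

section Core
variable [LinearOrder G]
variable [CovariantClass G G (· + ·) (· < ·)]
variable [CovariantClass G G (Function.swap (· + ·)) (· < ·)]
variable (𝒜 : G → AddSubgroup R) [GradedRing 𝒜]

/-- In the degenerate situation (unique graded vertex `HI`, minimal, disjoint from a
vertex `I0`), we derive a contradiction.  This encapsulates the descent on top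
degrees plus the idempotent argument. -/
lemma core_contradiction (hwo : {σ : G | 𝒜 σ ≠ ⊥}.IsWF)
    (HI : Ideal R) (hHbot : HI ≠ ⊥) (hHtop : HI ≠ ⊤) (hHhom : HI.IsHomogeneous 𝒜)
    (huniq : ∀ K : Ideal R, K ≠ ⊥ → K ≠ ⊤ → K.IsHomogeneous 𝒜 → K = HI)
    (hHmin : ∀ K : Ideal R, K ≤ HI → K ≠ ⊥ → K = HI)
    (I0 : Ideal R) (hI0top : I0 ≠ ⊤) (hdisj : I0 ⊓ HI = ⊥)
    (a : R) (haI : a ∈ I0) (ha0 : a ≠ 0) : False := by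
  have hdisj' : ∀ w : R, w ∈ I0 → w ∈ HI → w = 0 := by
    intro w h1 h2
    have : w ∈ I0 ⊓ HI := ⟨h1, h2⟩
    rw [hdisj] at this
    simpa using this
  -- minimal counterexample over top degrees
  set T : Set G := {σ | ∃ x : R, x ≠ 0 ∧ (∃ h ∈ HI, x = a - h) ∧ tdeg 𝒜 x = σ} with hT
  have hTsub : T ⊆ {σ : G | 𝒜 σ ≠ ⊥} := by
    rintro σ ⟨x, hx0, -, rfl⟩
    exact tdeg_mem 𝒜 hx0
  have hTwf : T.IsWF := hwo.mono hTsub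
  have hTne : T.Nonempty := ⟨tdeg 𝒜 a, a, ha0, ⟨0, HI.zero_mem, by simp⟩, rfl⟩
  obtain ⟨x, hx0, ⟨h, hhH, hxah⟩, hxd⟩ := hTwf.min_mem hTne
  by_cases hxtop : Ideal.span {x} = ⊤
  · -- x is left invertible : idempotent argument
    obtain ⟨u, hu⟩ : ∃ u : R, u * x = 1 := by
      have : (1 : R) ∈ Ideal.span {x} := by rw [hxtop]; trivial
      obtain ⟨u, hu⟩ := Submodule.mem_span_singleton.mp this
      exact ⟨u, hu⟩
    set eI : R := u * a with heIdef
    set eH : R := -(u * h) with heHdef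
    have heI : eI ∈ I0 := I0.smul_mem u haI
    have heH : eH ∈ HI := HI.neg_mem (HI.smul_mem u hhH)
    have hone : eI + eH = 1 := by
      rw [heIdef, heHdef, ← sub_eq_add_neg, ← mul_sub, ← hxah, hu]
    -- eH is a nonzero idempotent
    have heH0 : eH ≠ 0 := by
      intro hz
      rw [hz, add_zero] at hone
      exact hI0top (Ideal.eq_top_iff_one I0 |>.mpr (hone ▸ heI))
    have hidem : eH * eH = eH := by
      have h1 : eH - eH * eH = eH * eI := by
        have : eI = 1 - eH := by rw [← hone, add_sub_cancel_right]
        rw [this, mul_sub, mul_one]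
      have h2 : eH - eH * eH ∈ HI := HI.sub_mem heH (HI.smul_mem eH heH)
      have h3 : eH * eI ∈ I0 := I0.smul_mem eH heI
      have := hdisj' _ h3 (h1 ▸ h2)
      rw [← h1] at this
      · rw [sub_eq_zero] at this; exact this.symm
    -- HI = span {eH}, so w * eH = w for all w in HI
    have hHspan : Ideal.span {eH} = HI := by
      apply hHmin
      · rw [Ideal.span_le, Set.singleton_subset_iff]; exact heH
      · intro hb
        exact heH0 (by
          have : eH ∈ Ideal.span {eH} := Submodule.mem_span_singleton_self eH
          rw [hb] at this; simpa using this)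
    have hright : ∀ w : R, w ∈ HI → w * eH = w := by
      intro w hw
      rw [← hHspan] at hw
      obtain ⟨r, hr⟩ := Submodule.mem_span_singleton.mp hw
      rw [← hr]
      show r * eH * eH = r * eH
      rw [mul_assoc, hidem]
    -- h₀ : degree-0 component of eH is a nonzero homogeneous idempotent acting as
    -- a right unit on HI
    set h₀ : R := ((decompose 𝒜 eH 0 : 𝒜 0) : R) with hh₀
    have hh₀H : h₀ ∈ HI := hHhom 0 heH
    have hh₀mem : h₀ ∈ 𝒜 0 := SetLike.coe_mem _
    -- homogeneous elements of HI satisfy w * h₀ = w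
    have hcomp : ∀ (γ : G) (w : R), w ∈ 𝒜 γ → w ∈ HI → w * h₀ = w := by
      intro γ w hwγ hwH
      have h1 := congrArg (fun t => ((decompose 𝒜 t γ : 𝒜 γ) : R)) (hright w hwH)
      simp only at h1
      rw [gcomp_mul_left 𝒜 hwγ eH γ] at h1
      rw [DirectSum.decompose_of_mem_same 𝒜 hwγ] at h1
      rwa [decompose_coe_congr 𝒜 eH (neg_add_cancel γ)] at h1
    have hh₀0 : h₀ ≠ 0 := by
      have ht := hcomp (tdeg 𝒜 eH) (htop 𝒜 eH) (htop_mem 𝒜 eH)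
        (hHhom (tdeg 𝒜 eH) heH)
      intro hz
      rw [hz, mul_zero] at ht
      exact htop_ne_zero 𝒜 heH0 ht.symm
    have hh₀idem : h₀ * h₀ = h₀ := hcomp 0 h₀ hh₀mem hh₀H
    -- the complementary graded ideal
    set I' : Ideal R := Ideal.span {1 - h₀} with hI'
    have hmul0 : ∀ z : R, z ∈ I' → z * h₀ = 0 := by
      intro z hz
      obtain ⟨r, hr⟩ := Submodule.mem_span_singleton.mp hz
      rw [← hr]
      show r * (1 - h₀) * h₀ = 0
      rw [mul_assoc, sub_mul, one_mul, hh₀idem, sub_self, mul_zero]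
    have hI'bot : I' ≠ ⊥ := by
      intro hb
      have h1 : (1 - h₀ : R) ∈ I' := Submodule.mem_span_singleton_self _
      rw [hb] at h1
      have : (1 - h₀ : R) = 0 := by simpa using h1
      rw [sub_eq_zero] at this
      exact hHtop (Ideal.eq_top_iff_one HI |>.mpr (this ▸ hh₀H))
    have hI'top : I' ≠ ⊤ := by
      intro ht
      have h1 : (1 : R) ∈ I' := by rw [ht]; trivial
      have := hmul0 1 h1
      rw [one_mul] at this
      exact hh₀0 this
    have hI'hom : I'.IsHomogeneous 𝒜 := by
      apply Ideal.homogeneous_span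
      rintro t ht
      rw [Set.mem_singleton_iff] at ht
      subst ht
      exact ⟨0, AddSubgroup.sub_mem _ (SetLike.one_mem_graded 𝒜) hh₀mem⟩
    have : I' = HI := huniq I' hI'bot hI'top hI'hom
    have hh₀I' : h₀ ∈ I' := this ▸ hh₀H
    have := hmul0 h₀ hh₀I'
    rw [hh₀idem] at this
    exact hh₀0 this
  · -- span{x} is a proper nonzero ideal; its leading ideal is HI, descend
    have hxspan0 : Ideal.span {x} ≠ ⊥ := by
      intro hb
      have hmm : x ∈ Ideal.span {x} := Submodule.mem_span_singleton_self x
      rw [hb] at hmm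
      exact hx0 (by simpa using hmm)
    have htld : tilde 𝒜 (Ideal.span {x}) = HI :=
      huniq _ (tilde_ne_bot 𝒜 hxspan0)
        (fun ht => hxtop (tilde_eq_top 𝒜 hwo ht)) (tilde_isHomogeneous 𝒜 _)
    have htH : htop 𝒜 x ∈ HI := by
      rw [← htld]
      exact htop_mem_tilde 𝒜 (Submodule.mem_span_singleton_self x) hx0
    by_cases hx' : x - htop 𝒜 x = 0
    · -- x is homogeneous, so a ∈ I0 ⊓ HI = ⊥
      rw [sub_eq_zero] at hx'
      have hxH : x ∈ HI := hx' ▸ htH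
      have haH : a ∈ HI := by
        rw [hxah] at hxH
        have := HI.add_mem hxH hhH
        simpa using this
      exact ha0 (hdisj' a haI haH)
    · -- strictly smaller counterexample
      have hmem : tdeg 𝒜 (x - htop 𝒜 x) ∈ T := by
        refine ⟨x - htop 𝒜 x, hx', ⟨h + htop 𝒜 x, HI.add_mem hhH htH, ?_⟩, rfl⟩
        rw [hxah, sub_sub]
      exact hTwf.not_lt_min hTne hmem (hxd ▸ tdeg_sub_htop_lt 𝒜 hx0 hx')

end Core

section Main
variable [LinearOrder G]
variable [CovariantClass G G (· + ·) (· < ·)]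
variable [CovariantClass G G (Function.swap (· + ·)) (· < ·)]
variable (𝒜 : G → AddSubgroup R) [GradedRing 𝒜]

/-- the leading-ideal map on vertices -/
noncomputable def tVert (hwo : {σ : G | 𝒜 σ ≠ ⊥}.IsWF) (I : bigV R) : hV 𝒜 :=
  ⟨tilde 𝒜 I.1, tilde_ne_bot 𝒜 I.2.1, fun h => I.2.2 (tilde_eq_top 𝒜 hwo h),
    tilde_isHomogeneous 𝒜 _⟩

lemma reach_tVert (hwo : {σ : G | 𝒜 σ ≠ ⊥}.IsWF) {A B : bigV R}
    (h : (interGraph (bigV R)).Reachable A B) :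
    (interGraph (hV 𝒜)).Reachable (tVert 𝒜 hwo A) (tVert 𝒜 hwo B) := by
  obtain ⟨w⟩ := h
  induction w with
  | nil => exact SimpleGraph.Reachable.refl _
  | @cons A C B hadj p ih =>
    refine SimpleGraph.Reachable.trans ?_ ih
    apply reach_of_inf
    show tilde 𝒜 A.1 ⊓ tilde 𝒜 C.1 ≠ ⊥
    intro hb
    have h1 : tilde 𝒜 (A.1 ⊓ C.1) ≤ tilde 𝒜 A.1 ⊓ tilde 𝒜 C.1 :=
      le_inf (tilde_mono 𝒜 inf_le_left) (tilde_mono 𝒜 inf_le_right)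
    rw [hb, le_bot_iff] at h1
    exact tilde_ne_bot 𝒜 hadj.2 h1

theorem stmt19' (hwo : {σ : G | 𝒜 σ ≠ ⊥}.IsWF) :
    (interGraph (hV 𝒜)).Connected ↔
      (interGraph {I : Ideal R | I ≠ ⊥ ∧ I ≠ ⊤}).Connected := by
  constructor
  · -- graded graph connected → big graph connected
    intro hGr
    rw [SimpleGraph.connected_iff] at hGr
    obtain ⟨hGrPre, ⟨H⟩⟩ := hGr
    by_contra hbig
    have hne : Nonempty (bigV R) := ⟨⟨H.1, H.2.1, H.2.2.1⟩⟩
    rw [SimpleGraph.connected_iff] at hbig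
    push_neg at hbig
    have hnp : ¬ (interGraph (bigV R)).Preconnected := fun hp => (hbig hp).false hne.some
    have hE := edgeless_of_not_preconnected hnp
    -- the graded graph is edgeless, hence (being connected) a single vertex
    have hEGr : ∀ K L : hV 𝒜, ¬ (interGraph (hV 𝒜)).Adj K L := by
      intro K L hadj
      exact hE ⟨K.1, K.2.1, K.2.2.1⟩ ⟨L.1, L.2.1, L.2.2.1⟩
        ⟨fun e => hadj.1 (Subtype.ext (Subtype.mk_eq_mk.mp e)), hadj.2⟩
    have huniq' : ∀ K L : hV 𝒜, K = L := fun K L =>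
      reachable_eq_of_edgeless hEGr (hGrPre K L)
    have huniq : ∀ K : Ideal R, K ≠ ⊥ → K ≠ ⊤ → K.IsHomogeneous 𝒜 → K = H.1 := by
      intro K h1 h2 h3
      exact congrArg Subtype.val (huniq' ⟨K, h1, h2, h3⟩ H)
    -- pick a vertex different from H
    have hnp' : ∃ A B : bigV R, ¬ (interGraph (bigV R)).Reachable A B := by
      rw [SimpleGraph.Preconnected] at hnp
      push_neg at hnp
      exact hnp
    obtain ⟨A, B, hAB⟩ := hnp'
    have hABne : A ≠ B := fun h => hAB (h ▸ SimpleGraph.Reachable.refl A)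
    have hex : ∃ I0 : bigV R, (I0 : Ideal R) ≠ H.1 := by
      by_cases hA : (A : Ideal R) = H.1
      · refine ⟨B, fun hB => hABne (Subtype.ext (hA.trans hB.symm))⟩
      · exact ⟨A, hA⟩
    obtain ⟨I0, hI0H⟩ := hex
    have hHbig : H.1 ∈ bigV R := ⟨H.2.1, H.2.2.1⟩
    have hdisj : I0.1 ⊓ H.1 = ⊥ := by
      by_contra hc
      exact hE I0 ⟨H.1, hHbig⟩ ⟨fun e => hI0H (congrArg Subtype.val e), hc⟩
    have hHmin : ∀ K : Ideal R, K ≤ H.1 → K ≠ ⊥ → K = H.1 := by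
      intro K hle hKb
      by_contra hKH
      have hKtop : K ≠ ⊤ := fun h => H.2.2.1 (top_le_iff.mp (h ▸ hle))
      exact hE ⟨K, hKb, hKtop⟩ ⟨H.1, hHbig⟩
        ⟨fun e => hKH (congrArg Subtype.val e), by rwa [inf_eq_left.mpr hle]⟩
    obtain ⟨a, haI, ha0⟩ := (Submodule.ne_bot_iff I0.1).mp I0.2.1
    exact core_contradiction 𝒜 hwo H.1 H.2.1 H.2.2.1 H.2.2.2 huniq hHmin
      I0.1 I0.2.2 hdisj a haI ha0
  · -- big graph connected → graded graph connected
    intro hbig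
    rw [SimpleGraph.connected_iff] at hbig ⊢
    obtain ⟨hpre, ⟨A⟩⟩ := hbig
    refine ⟨?_, ⟨tVert 𝒜 hwo A⟩⟩
    intro K L
    have h1 := reach_tVert 𝒜 hwo (hpre ⟨K.1, K.2.1, K.2.2.1⟩ ⟨L.1, L.2.1, L.2.2.1⟩)
    have e1 : tVert 𝒜 hwo ⟨K.1, K.2.1, K.2.2.1⟩ = K :=
      Subtype.ext (tilde_of_isHomogeneous 𝒜 hwo K.2.2.2)
    have e2 : tVert 𝒜 hwo ⟨L.1, L.2.1, L.2.2.1⟩ = L :=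
      Subtype.ext (tilde_of_isHomogeneous 𝒜 hwo L.2.2.2)
    rwa [e1, e2] at h1

end Main

/-- Let `G` be an ordered group (written additively: a linearly
ordered group with order translation-invariant on both sides) and `R` a
`G`-graded ring whose support `{σ | 𝒜 σ ≠ 0}` is well-ordered.  Then the
intersection graph of graded left ideals is connected iff the intersection graph
of all left ideals is connected. -/
theorem stmt19 [LinearOrder G]
    [CovariantClass G G (· + ·) (· < ·)]
    [CovariantClass G G (Function.swap (· + ·)) (· < ·)]
    (𝒜 : G → AddSubgroup R) [GradedRing 𝒜]
    (hwo : {σ : G | 𝒜 σ ≠ ⊥}.IsWF) :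
    (interGraph (hV 𝒜)).Connected ↔
      (interGraph {I : Ideal R | I ≠ ⊥ ∧ I ≠ ⊤}).Connected := by
  exact stmt19' 𝒜 hwo
end
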